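/- arXiv:2208.06553 — 2 statements merged into one kernel-verified Lean document; each statement's English description precedes it below -/
import Mathlib

section
/- Let D be a finite set partitioned into disjoint groups D₁,…,D_C, let k ∈ Z₊ and l_c ≤ h_c be nonnegative integers for each c with Σ_c l_c ≤ k. Define I = { S ⊆ D : Σ_{c=1}^{C} max(|S ∩ D_c|, l_c) ≤ k and |S ∩ D_c| ≤ h_c for all c }. Then (D, I) is a matroid: ∅ ∈ I; I is downward closed; and for any S₁, S₂ ∈ I with |S₂| > |S₁| there exists p ∈ S₂ \ S₁ with S₁ ∪ {p} ∈ I. -/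
/-- The fairness family `I` forms a matroid on `D`. -/
theorem stmt_10 {α : Type*} [DecidableEq α] (D : Finset α) (C : ℕ)
    (G : Fin C → Finset α)
    (hsub : ∀ c, G c ⊆ D) (hdisj : ∀ c c', c ≠ c' → Disjoint (G c) (G c'))
    (hcover : D = Finset.univ.biUnion G)
    (k : ℕ) (hk : 0 < k) (l h : Fin C → ℕ)
    (hlh : ∀ c, l c ≤ h c) (hhB : ∀ c, h c ≤ (G c).card) (hsum : ∑ c, l c ≤ k) :
    let I : Finset α → Prop := fun S =>
      S ⊆ D ∧ (∑ c, max (S ∩ G c).card (l c)) ≤ k ∧ ∀ c, (S ∩ G c).card ≤ h c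
    I ∅ ∧
    (∀ S₁ S₂ : Finset α, S₁ ⊆ S₂ → I S₂ → I S₁) ∧
    (∀ S₁ S₂ : Finset α, I S₁ → I S₂ → S₁.card < S₂.card →
      ∃ p ∈ S₂ \ S₁, I (insert p S₁)) := by
  intro I
  have hpart : ∀ S : Finset α, S ⊆ D → S.card = ∑ c, (S ∩ G c).card := by
    intro S hS
    have hrep : S = Finset.univ.biUnion (fun c => S ∩ G c) := by
      ext x
      simp only [Finset.mem_biUnion, Finset.mem_inter, Finset.mem_univ, true_and]
      constructor
      · intro hx
        have hxD := hS hx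
        rw [hcover] at hxD
        simp only [Finset.mem_biUnion, Finset.mem_univ, true_and] at hxD
        obtain ⟨c, hc⟩ := hxD
        exact ⟨c, hx, hc⟩
      · rintro ⟨c, hx, -⟩
        exact hx
    conv_lhs => rw [hrep]
    exact Finset.card_biUnion (fun c _ c' _ hcc =>
      (hdisj c c' hcc).mono Finset.inter_subset_right Finset.inter_subset_right)
  refine ⟨⟨Finset.empty_subset D, ?_, ?_⟩, ?_, ?_⟩
  · simpa using hsum
  · intro c; simp
  · rintro S₁ S₂ hss ⟨hD2, hk2, hh2⟩
    refine ⟨hss.trans hD2,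
      le_trans (Finset.sum_le_sum fun c _ =>
        max_le_max (Finset.card_le_card (Finset.inter_subset_inter hss le_rfl)) le_rfl) hk2,
      fun c => le_trans
        (Finset.card_le_card (Finset.inter_subset_inter hss le_rfl)) (hh2 c)⟩
  · rintro S₁ S₂ ⟨hD1, hk1, hh1⟩ ⟨hD2, hk2, hh2⟩ hlt
    have hab_sum : ∑ c, (S₁ ∩ G c).card < ∑ c, (S₂ ∩ G c).card := by
      rw [← hpart S₁ hD1, ← hpart S₂ hD2]; exact hlt
    -- shared construction: given a class with room and a bound on the new sum,
    -- produce the exchange element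
    have main : ∀ c₀ : Fin C, (S₁ ∩ G c₀).card < (S₂ ∩ G c₀).card →
        (∑ c, max (if c = c₀ then (S₁ ∩ G c).card + 1 else (S₁ ∩ G c).card) (l c)) ≤ k →
        ∃ p ∈ S₂ \ S₁, I (insert p S₁) := by
      intro c₀ hab hsum'
      have hns : ¬ (S₂ ∩ G c₀ ⊆ S₁ ∩ G c₀) := fun hcsub =>
        absurd (Finset.card_le_card hcsub) (by omega)
      obtain ⟨p, hp2, hp1⟩ := Finset.not_subset.mp hns
      have hpG : p ∈ G c₀ := (Finset.mem_inter.mp hp2).2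
      have hpS₂ : p ∈ S₂ := (Finset.mem_inter.mp hp2).1
      have hpS₁ : p ∉ S₁ := fun hx => hp1 (Finset.mem_inter.mpr ⟨hx, hpG⟩)
      have hins : ∀ c, ((insert p S₁) ∩ G c).card =
          if c = c₀ then (S₁ ∩ G c).card + 1 else (S₁ ∩ G c).card := by
        intro c
        by_cases hc : c = c₀
        · subst hc
          rw [if_pos rfl, Finset.insert_inter_of_mem hpG,
            Finset.card_insert_of_notMem hp1]
        · rw [if_neg hc, Finset.insert_inter_of_notMem
            (Finset.disjoint_left.mp (hdisj c₀ c fun hcc => hc hcc.symm) hpG)]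
      refine ⟨p, Finset.mem_sdiff.mpr ⟨hpS₂, hpS₁⟩,
        Finset.insert_subset (hsub c₀ hpG) hD1, ?_, ?_⟩
      · calc ∑ c, max ((insert p S₁ ∩ G c).card) (l c)
            = ∑ c, max (if c = c₀ then (S₁ ∩ G c).card + 1 else (S₁ ∩ G c).card) (l c) :=
              Finset.sum_congr rfl fun c _ => by rw [hins c]
          _ ≤ k := hsum'
      · intro c
        rw [hins c]
        split_ifs with hc
        · rw [hc]
          have := hh2 c₀
          omega
        · exact hh1 c
    obtain ⟨c₁, hc₁⟩ : ∃ c, (S₁ ∩ G c).card < (S₂ ∩ G c).card := by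
      by_contra hno
      push_neg at hno
      exact absurd (Finset.sum_le_sum fun c (_ : c ∈ Finset.univ) => hno c) (by omega)
    by_cases hA : ∃ c, (S₁ ∩ G c).card < (S₂ ∩ G c).card ∧ (S₁ ∩ G c).card < l c
    · obtain ⟨c₀, habc, hal⟩ := hA
      refine main c₀ habc ?_
      calc ∑ c, max (if c = c₀ then (S₁ ∩ G c).card + 1 else (S₁ ∩ G c).card) (l c)
          = ∑ c, max ((S₁ ∩ G c).card) (l c) := by
            refine Finset.sum_congr rfl fun c _ => ?_
            split_ifs with hc
            · rw [hc, Nat.max_eq_right (by omega), Nat.max_eq_right (by omega)]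
            · rfl
        _ ≤ k := hk1
    · push_neg at hA
      have hpt : ∀ c, max ((S₁ ∩ G c).card) (l c) + (S₂ ∩ G c).card ≤
          max ((S₂ ∩ G c).card) (l c) + (S₁ ∩ G c).card := by
        intro c
        by_cases hab : (S₁ ∩ G c).card < (S₂ ∩ G c).card
        · have hla := hA c hab
          have h1 := le_max_left ((S₂ ∩ G c).card) (l c)
          rw [Nat.max_eq_left hla]
          omega
        · rcases max_cases ((S₁ ∩ G c).card) (l c) with ⟨h1, h2⟩ | ⟨h1, h2⟩ <;>
            rcases max_cases ((S₂ ∩ G c).card) (l c) with ⟨h3, h4⟩ | ⟨h3, h4⟩ <;> omega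
      have hsum_pt := Finset.sum_le_sum (s := Finset.univ) fun c _ => hpt c
      rw [Finset.sum_add_distrib, Finset.sum_add_distrib] at hsum_pt
      have hstrict : ∑ c, max ((S₁ ∩ G c).card) (l c) + 1 ≤ k := by omega
      refine main c₁ hc₁ ?_
      have heq : ∑ c, max (if c = c₁ then (S₁ ∩ G c).card + 1 else (S₁ ∩ G c).card) (l c)
          = ∑ c, (max ((S₁ ∩ G c).card) (l c) + if c = c₁ then 1 else 0) := by
        refine Finset.sum_congr rfl fun c _ => ?_
        split_ifs with hc
        · rw [hc, Nat.max_eq_left (hA c₁ hc₁),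
            Nat.max_eq_left (le_trans (hA c₁ hc₁) (Nat.le_succ _))]
        · simp
      rw [heq, Finset.sum_add_distrib]
      have hone : (∑ c, if c = c₁ then 1 else 0) = 1 := by simp
      rw [hone]
      exact hstrict
end

section
/- With the fairness matroid I as above, every subset S ⊆ D with |S| = k and l_c ≤ |S ∩ D_c| ≤ h_c for all c belongs to I; moreover, for every S ∈ I with |S| < k there exists a superset S' ⊇ S with |S'| = k and l_c ≤ |S' ∩ D_c| ≤ h_c for all c (assuming Σ_c l_c ≤ k ≤ Σ_c min(h_c, |D_c|)). -/
lemma sandwich' {ι : Type*} [DecidableEq ι] (s : Finset ι) :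
    ∀ (a b : ι → ℕ) (k : ℕ), (∀ c ∈ s, a c ≤ b c) →
    (∑ c ∈ s, a c) ≤ k → k ≤ ∑ c ∈ s, b c →
    ∃ m : ι → ℕ, (∀ c ∈ s, a c ≤ m c ∧ m c ≤ b c) ∧ ∑ c ∈ s, m c = k := by
  induction s using Finset.induction_on with
  | empty =>
    intro a b k _ h1 h2
    simp only [Finset.sum_empty] at h1 h2 ⊢
    exact ⟨a, by simp, by omega⟩
  | @insert x s hx ih =>
    intro a b k hab h1 h2
    rw [Finset.sum_insert hx] at h1 h2
    have hsab : ∑ c ∈ s, a c ≤ ∑ c ∈ s, b c :=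
      Finset.sum_le_sum fun c hc => hab c (Finset.mem_insert_of_mem hc)
    have haxbx : a x ≤ b x := hab x (Finset.mem_insert_self x s)
    obtain ⟨mx, h1x, h2x, h3x, h4x, h5x⟩ :
        ∃ mx, a x ≤ mx ∧ mx ≤ b x ∧ (∑ c ∈ s, a c) ≤ k - mx ∧
          k - mx ≤ ∑ c ∈ s, b c ∧ mx ≤ k :=
      ⟨min (b x) (k - ∑ c ∈ s, a c), by omega, by omega, by omega, by omega, by omega⟩
    obtain ⟨m, hm, hsum⟩ := ih a b (k - mx)
      (fun c hc => hab c (Finset.mem_insert_of_mem hc)) h3x h4x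
    refine ⟨fun c => if c = x then mx else m c, ?_, ?_⟩
    · intro c hc
      rcases Finset.mem_insert.1 hc with rfl | hc
      · simp [h1x, h2x]
      · have hne : c ≠ x := fun hcc => hx (hcc ▸ hc)
        simpa [hne] using hm c hc
    · rw [Finset.sum_insert hx, if_pos rfl,
        Finset.sum_congr rfl (fun c hc => if_neg (by rintro rfl; exact hx hc)), hsum]
      omega

/-- Every fair size-`k` set is independent, and every independent set of size
less than `k` extends to a fair size-`k` set. -/
theorem stmt_11 {α : Type*} [DecidableEq α] (D : Finset α) (C : ℕ)
    (G : Fin C → Finset α)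
    (hsub : ∀ c, G c ⊆ D) (hdisj : ∀ c c', c ≠ c' → Disjoint (G c) (G c'))
    (hcover : D = Finset.univ.biUnion G)
    (k : ℕ) (hk : 0 < k) (l h : Fin C → ℕ)
    (hlh : ∀ c, l c ≤ h c) (hhB : ∀ c, h c ≤ (G c).card)
    (hlo : ∑ c, l c ≤ k) (hhi : k ≤ ∑ c, min (h c) (G c).card) :
    let I : Finset α → Prop := fun S =>
      S ⊆ D ∧ (∑ c, max (S ∩ G c).card (l c)) ≤ k ∧ ∀ c, (S ∩ G c).card ≤ h c
    (∀ S : Finset α, S ⊆ D → S.card = k →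
      (∀ c, l c ≤ (S ∩ G c).card ∧ (S ∩ G c).card ≤ h c) → I S) ∧
    (∀ S : Finset α, I S → S.card < k →
      ∃ S' : Finset α, S ⊆ S' ∧ S' ⊆ D ∧ S'.card = k ∧
        ∀ c, l c ≤ (S' ∩ G c).card ∧ (S' ∩ G c).card ≤ h c) := by
  intro I
  -- cardinality decomposition for subsets of D
  have key : ∀ S : Finset α, S ⊆ D → S.card = ∑ c, (S ∩ G c).card := by
    intro S hS
    have hSeq : S = Finset.univ.biUnion (fun c => S ∩ G c) := by
      ext a
      simp only [Finset.mem_biUnion, Finset.mem_inter, Finset.mem_univ, true_and]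
      constructor
      · intro ha
        have : a ∈ D := hS ha
        rw [hcover] at this
        simp only [Finset.mem_biUnion, Finset.mem_univ, true_and] at this
        obtain ⟨c, hc⟩ := this
        exact ⟨c, ha, hc⟩
      · rintro ⟨c, ha, _⟩; exact ha
    conv_lhs => rw [hSeq]
    exact Finset.card_biUnion (fun c _ c' _ hcc =>
      (hdisj c c' hcc).mono Finset.inter_subset_right Finset.inter_subset_right)
  constructor
  · intro S hS hcard hfair
    refine ⟨hS, le_of_eq ?_, fun c => (hfair c).2⟩
    calc ∑ c, max (S ∩ G c).card (l c) = ∑ c, (S ∩ G c).card :=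
          Finset.sum_congr rfl fun c _ => max_eq_left (hfair c).1
      _ = S.card := (key S hS).symm
      _ = k := hcard
  · rintro S ⟨hS, hsum, hh⟩ hcard
    obtain ⟨m, hm, hmsum⟩ := sandwich' Finset.univ
      (fun c => max (S ∩ G c).card (l c)) (fun c => min (h c) (G c).card) k
      (fun c _ => by
        have h1 := hh c
        have h2 := hhB c
        have h3 := hlh c
        have h4 : (S ∩ G c).card ≤ (G c).card :=
          Finset.card_le_card Finset.inter_subset_right
        simp only [max_le_iff, le_min_iff]; omega) hsum hhi
    choose T hT1 hT2 hT3 using fun c =>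
      Finset.exists_subsuperset_card_eq (Finset.inter_subset_right : S ∩ G c ⊆ G c)
        ((le_max_left _ _).trans (hm c (Finset.mem_univ c)).1)
        ((hm c (Finset.mem_univ c)).2.trans (min_le_right _ _))
    refine ⟨Finset.univ.biUnion T, ?_, ?_, ?_, ?_⟩
    · intro a ha
      have : a ∈ D := hS ha
      rw [hcover] at this
      simp only [Finset.mem_biUnion, Finset.mem_univ, true_and] at this ⊢
      obtain ⟨c, hc⟩ := this
      exact ⟨c, hT1 c (Finset.mem_inter.2 ⟨ha, hc⟩)⟩
    · intro a ha
      simp only [Finset.mem_biUnion, Finset.mem_univ, true_and] at ha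
      obtain ⟨c, hc⟩ := ha
      exact hsub c (hT2 c hc)
    · rw [Finset.card_biUnion (fun c _ c' _ hcc =>
        (hdisj c c' hcc).mono (hT2 c) (hT2 c'))]
      rw [Finset.sum_congr rfl fun c _ => hT3 c]
      exact hmsum
    · intro c
      have hTeq : Finset.univ.biUnion T ∩ G c = T c := by
        ext a
        simp only [Finset.mem_inter, Finset.mem_biUnion, Finset.mem_univ, true_and]
        constructor
        · rintro ⟨⟨c', hc'⟩, hg⟩
          rcases eq_or_ne c' c with rfl | hne
          · exact hc'
          · exact absurd hg (Finset.disjoint_left.1 (hdisj c' c hne) (hT2 c' hc'))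
        · intro ha; exact ⟨⟨c, ha⟩, hT2 c ha⟩
      rw [hTeq, hT3 c]
      have := (hm c (Finset.mem_univ c))
      constructor
      · exact (le_max_right _ _).trans this.1
      · exact this.2.trans (min_le_left _ _)
end
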